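/- Let φ_1(y,a,z) = y·a/π(S(z)) − y·(1−a)/(1−π(S(z))) and φ_0(y,a,z) = (a/π(S(z)))(y − m(1,z)) − ((1−a)/(1−π(S(z))))(y − m(0,z)) + (m(1,z) − m(0,z) − β_0). Suppose h ∈ L²(P_0) satisfies: (a) E[h(Y,A,Z) | A = a, Z] does not depend on a (call it h̃(Z)), and (b) E[h̃(Z)] = 0. Then E[h(Y,A,Z)·(φ_1(Y,A,Z) − φ_0(Y,A,Z))] = 0; i.e., φ_1 − φ_0 is orthogonal in L²(P_0) to every element of the tangent space. -/

import Mathlib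

/-!
The outcome cancels in `φ₁ - φ₀`, leaving a function `R(A, Z)` of treatment and covariates,
square integrable because finitely many strata keep `π` away from `0` and `1`. Conditioning on
`(A, Z)` gives `E[h R] = E[h̃(Z) R]`, and conditioning on `Z` then gives
`E[h̃(Z) R] = E[h̃(Z) E[R | Z]]`. Since `E[A | Z] = π(S(Z))`, the inverse propensity weights turn
`E[R | Z]` into `m₁ - m₀ - (m₁ - m₀ - β₀) = β₀`, a constant, so `E[h R] = β₀ E[h̃(Z)] = 0`.
-/

open MeasureTheory ProbabilityTheory Filter Topology
open scoped ENNReal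

lemma exists_pos_forall_mem_Icc_of_finite {ι : Type*} [Finite ι] [Nonempty ι] {π : ι → ℝ}
    (hπ₀ : ∀ s, 0 < π s) (hπ₁ : ∀ s, π s < 1) : ∃ ε, 0 < ε ∧ ∀ s, π s ∈ Set.Icc ε (1 - ε) := by
  obtain ⟨s₀, hs₀⟩ := Finite.exists_min fun s => min (π s) (1 - π s)
  refine ⟨min (π s₀) (1 - π s₀), lt_min (hπ₀ s₀) (sub_pos.2 (hπ₁ s₀)), fun s =>
    ⟨(hs₀ s).trans (min_le_left _ _), ?_⟩⟩
  linarith [(hs₀ s).trans (min_le_right _ _)]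

section

variable {Ω : Type*} {m mΩ : MeasurableSpace Ω} {μ : Measure Ω}

lemma integral_mul_eq_integral_mul_of_condExp_ae_eq (hm : m ≤ mΩ) [SigmaFinite (μ.trim hm)]
    {f g g' : Ω → ℝ} (hf : StronglyMeasurable[m] f) (hfg : Integrable (fun ω => f ω * g ω) μ)
    (hg : Integrable g μ) (hg' : μ[g|m] =ᵐ[μ] g') :
    ∫ ω, f ω * g ω ∂μ = ∫ ω, f ω * g' ω ∂μ :=
  calc ∫ ω, f ω * g ω ∂μ = ∫ ω, μ[f * g|m] ω ∂μ := (integral_condExp hm).symm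
    _ = ∫ ω, f ω * g' ω ∂μ := integral_congr_ae <|
        (condExp_mul_of_stronglyMeasurable_left hf hfg hg).trans <|
          hg'.mono fun ω h => by simp only [Pi.mul_apply, h]

lemma integral_mul_eq_zero_of_condExp_ae_eq_const {m₁ m₂ : MeasurableSpace Ω} (hm₁₂ : m₁ ≤ m₂)
    (hm₂ : m₂ ≤ mΩ) [IsFiniteMeasure μ] {h t r : Ω → ℝ} {c : ℝ} (hh : MemLp h 2 μ)
    (ht : StronglyMeasurable[m₁] t) (ht₀ : ∫ ω, t ω ∂μ = 0) (hht : t =ᵐ[μ] μ[h|m₂])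
    (hr : MemLp r 2 μ) (hrm : StronglyMeasurable[m₂] r) (hrc : μ[r|m₁] =ᵐ[μ] fun _ => c) :
    ∫ ω, h ω * r ω ∂μ = 0 :=
  have ht₂ : MemLp t 2 μ := (hh.condExp one_le_two).ae_eq hht.symm
  calc ∫ ω, h ω * r ω ∂μ = ∫ ω, r ω * t ω ∂μ := by
        simp_rw [mul_comm (h _)]
        exact integral_mul_eq_integral_mul_of_condExp_ae_eq hm₂ hrm (hr.integrable_mul hh)
          (hh.integrable one_le_two) hht.symm
    _ = ∫ ω, t ω * c ∂μ := by
        simp_rw [mul_comm (r _)]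
        exact integral_mul_eq_integral_mul_of_condExp_ae_eq (hm₁₂.trans hm₂) ht
          (ht₂.integrable_mul hr) (hr.integrable one_le_two) hrc
    _ = 0 := by rw [integral_mul_const, ht₀, zero_mul]

lemma condExp_one_sub_ae_eq (hm : m ≤ mΩ) [IsFiniteMeasure μ] {A e : Ω → ℝ}
    (hA : Integrable A μ) (hAe : μ[A|m] =ᵐ[μ] e) :
    μ[fun ω => 1 - A ω|m] =ᵐ[μ] fun ω => 1 - e ω :=
  (condExp_sub (integrable_const 1) hA m).trans <| by
    filter_upwards [hAe] with ω h
    simp only [Pi.sub_apply, condExp_const hm, h]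

lemma MeasureTheory.MemLp.mul_div_of_le {p : ℝ≥0∞} {a e f : Ω → ℝ} {ε : ℝ} (hf : MemLp f p μ)
    (ha : Measurable a) (he : Measurable e) (ha₀₁ : ∀ ω, a ω ∈ Set.Icc 0 1) (hε : 0 < ε)
    (hεe : ∀ ω, ε ≤ e ω) :
    MemLp (fun ω => a ω * (f ω / e ω)) p μ := by
  refine hf.of_le_mul (c := ε⁻¹)
    (ha.aestronglyMeasurable.mul (hf.1.mul he.inv.aestronglyMeasurable)) (ae_of_all _ fun ω => ?_)
  obtain ⟨ha₀, ha₁⟩ := ha₀₁ ω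
  have he₀ : 0 < e ω := hε.trans_le (hεe ω)
  rw [norm_mul, norm_div, Real.norm_of_nonneg ha₀, Real.norm_of_nonneg he₀.le, ← div_eq_inv_mul]
  calc a ω * (‖f ω‖ / e ω) ≤ 1 * (‖f ω‖ / ε) := by gcongr; exact hεe ω
    _ = ‖f ω‖ / ε := one_mul _

lemma integrable_of_forall_mem_Icc [IsFiniteMeasure μ] {a : Ω → ℝ} (ha : Measurable a)
    (ha₀₁ : ∀ ω, a ω ∈ Set.Icc 0 1) : Integrable a μ :=
  Integrable.of_bound ha.aestronglyMeasurable 1 <|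
    ae_of_all _ fun ω => by rw [Real.norm_of_nonneg (ha₀₁ ω).1]; exact (ha₀₁ ω).2

lemma MeasureTheory.Integrable.mul_div_of_le {a e f : Ω → ℝ} {ε : ℝ} (hf : Integrable f μ)
    (ha : Measurable a) (he : Measurable e) (ha₀₁ : ∀ ω, a ω ∈ Set.Icc 0 1) (hε : 0 < ε)
    (hεe : ∀ ω, ε ≤ e ω) :
    Integrable (fun ω => a ω * (f ω / e ω)) μ :=
  memLp_one_iff_integrable.1 <| (memLp_one_iff_integrable.2 hf).mul_div_of_le ha he ha₀₁ hε hεe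

lemma condExp_mul_div_ae_eq (hm : m ≤ mΩ) [IsFiniteMeasure μ] {a e f : Ω → ℝ} {ε : ℝ}
    (ha : Measurable a) (he : Measurable[m] e) (hfm : Measurable[m] f)
    (ha₀₁ : ∀ ω, a ω ∈ Set.Icc 0 1) (hae : μ[a|m] =ᵐ[μ] e) (hε : 0 < ε) (hεe : ∀ ω, ε ≤ e ω)
    (hf : Integrable f μ) :
    μ[fun ω => a ω * (f ω / e ω)|m] =ᵐ[μ] f := by
  refine (condExp_mul_of_stronglyMeasurable_right (hfm.div he).stronglyMeasurable
    (hf.mul_div_of_le ha (he.mono hm le_rfl) ha₀₁ hε hεe)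
    (integrable_of_forall_mem_Icc ha ha₀₁)).trans ?_
  filter_upwards [hae] with ω h
  have he₀ : e ω ≠ 0 := (hε.trans_le (hεe ω)).ne'
  simp only [Pi.mul_apply, Pi.div_apply, h]
  field_simp

/-- `φ₁ - φ₀`, in which the outcome cancels: `τ` plays the role of `β₀`, `e` of the propensity
`π (S Z)` and `μᵢ` of the outcome regressions `mᵢ(Z)`. -/
noncomputable def ipwEifDifference (A e μ₀ μ₁ : Ω → ℝ) (τ : ℝ) (ω : Ω) : ℝ :=
  A ω * (μ₁ ω / e ω) - (1 - A ω) * (μ₀ ω / (1 - e ω)) - (μ₁ ω - μ₀ ω - τ)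

variable {A e μ₀ μ₁ : Ω → ℝ} {ε : ℝ}

lemma measurable_ipwEifDifference (τ : ℝ) (hA : Measurable[m] A) (he : Measurable[m] e)
    (hμ₀ : Measurable[m] μ₀) (hμ₁ : Measurable[m] μ₁) :
    Measurable[m] (ipwEifDifference A e μ₀ μ₁ τ) :=
  ((hA.mul (hμ₁.div he)).sub
    ((measurable_const.sub hA).mul (hμ₀.div (measurable_const.sub he)))).sub
    ((hμ₁.sub hμ₀).sub measurable_const)

lemma memLp_ipwEifDifference {p : ℝ≥0∞} [IsFiniteMeasure μ] (τ : ℝ) (hA : Measurable A)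
    (he : Measurable e) (hA₀₁ : ∀ ω, A ω ∈ Set.Icc 0 1) (hε : 0 < ε)
    (hεe : ∀ ω, e ω ∈ Set.Icc ε (1 - ε)) (hμ₀ : MemLp μ₀ p μ) (hμ₁ : MemLp μ₁ p μ) :
    MemLp (ipwEifDifference A e μ₀ μ₁ τ) p μ :=
  ((hμ₁.mul_div_of_le hA he hA₀₁ hε fun ω => (hεe ω).1).sub
    (hμ₀.mul_div_of_le (a := fun ω => 1 - A ω) (e := fun ω => 1 - e ω) (measurable_const.sub hA)
      (measurable_const.sub he) (fun ω => Set.Icc.one_sub_mem (hA₀₁ ω)) hε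
      fun ω => by linarith [(hεe ω).2])).sub
    ((hμ₁.sub hμ₀).sub (memLp_const τ))

lemma condExp_ipwEifDifference (hm : m ≤ mΩ) [IsFiniteMeasure μ] (τ : ℝ) (hA : Measurable A)
    (he : Measurable[m] e) (hμ₀m : Measurable[m] μ₀) (hμ₁m : Measurable[m] μ₁)
    (hA₀₁ : ∀ ω, A ω ∈ Set.Icc 0 1) (hAe : μ[A|m] =ᵐ[μ] e) (hε : 0 < ε)
    (hεe : ∀ ω, e ω ∈ Set.Icc ε (1 - ε)) (hμ₀ : Integrable μ₀ μ) (hμ₁ : Integrable μ₁ μ) :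
    μ[ipwEifDifference A e μ₀ μ₁ τ|m] =ᵐ[μ] fun _ => τ := by
  have hA₀₁' : ∀ ω, 1 - A ω ∈ Set.Icc 0 1 := fun ω => Set.Icc.one_sub_mem (hA₀₁ ω)
  have hεe₁ : ∀ ω, ε ≤ e ω := fun ω => (hεe ω).1
  have hεe₀ : ∀ ω, ε ≤ 1 - e ω := fun ω => by linarith [(hεe ω).2]
  have hA₀ : Measurable fun ω => 1 - A ω := measurable_const.sub hA
  have he₀ : Measurable[m] fun ω => 1 - e ω := measurable_const.sub he
  have hT₁ := hμ₁.mul_div_of_le hA (he.mono hm le_rfl) hA₀₁ hε hεe₁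
  have hT₀ := hμ₀.mul_div_of_le hA₀ (he₀.mono hm le_rfl) hA₀₁' hε hεe₀
  have hD : Integrable (fun ω => μ₁ ω - μ₀ ω - τ) μ := (hμ₁.sub hμ₀).sub (integrable_const τ)
  have hcD : μ[fun ω => μ₁ ω - μ₀ ω - τ|m] = fun ω => μ₁ ω - μ₀ ω - τ :=
    condExp_of_stronglyMeasurable hm ((hμ₁m.sub hμ₀m).sub measurable_const).stronglyMeasurable hD
  filter_upwards [condExp_sub (hT₁.sub hT₀) hD m, condExp_sub hT₁ hT₀ m,
    condExp_mul_div_ae_eq hm hA he hμ₁m hA₀₁ hAe hε hεe₁ hμ₁,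
    condExp_mul_div_ae_eq hm hA₀ he₀ hμ₀m hA₀₁'
      (condExp_one_sub_ae_eq hm (integrable_of_forall_mem_Icc hA hA₀₁) hAe) hε hεe₀ hμ₀]
    with ω h h' h₁ h₀
  have hdef : ipwEifDifference A e μ₀ μ₁ τ = (fun ω => A ω * (μ₁ ω / e ω))
      - (fun ω => (1 - A ω) * (μ₀ ω / (1 - e ω))) - fun ω => μ₁ ω - μ₀ ω - τ := rfl
  rw [hdef, h, Pi.sub_apply, h', hcD, Pi.sub_apply, h₁, h₀]
  ring

end

theorem eif_projection_orthogonality_general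
    {Ω : Type*} [mΩ : MeasurableSpace Ω] (P : Measure Ω) [IsProbabilityMeasure P]
    (k 𝒮 : ℕ) (Y0 Y1 : Ω → ℝ) (Z : Ω → Fin k → ℝ) (A : Ω → ℝ)
    (S : (Fin k → ℝ) → Fin 𝒮) (π : Fin 𝒮 → ℝ)
    (hπ0 : ∀ s, 0 < π s) (hπ1 : ∀ s, π s < 1)
    (hZ : Measurable Z) (hS : Measurable S) (hA : Measurable A)
    (hA01 : ∀ ω, A ω = 0 ∨ A ω = 1)
    (hY0 : MemLp Y0 2 P) (hY1 : MemLp Y1 2 P)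
    (hprop : (P[A | MeasurableSpace.comap Z inferInstance])
      =ᵐ[P] fun ω => π (S (Z ω)))
    (m0f m1f : (Fin k → ℝ) → ℝ) (hm0f : Measurable m0f) (hm1f : Measurable m1f)
    (hm0 : (fun ω => m0f (Z ω)) =ᵐ[P] P[Y0 | MeasurableSpace.comap Z inferInstance])
    (hm1 : (fun ω => m1f (Z ω)) =ᵐ[P] P[Y1 | MeasurableSpace.comap Z inferInstance])
    (hfun : ℝ × ℝ × (Fin k → ℝ) → ℝ)
    (htilde : (Fin k → ℝ) → ℝ) (hhtilde : Measurable htilde) :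
    let Y : Ω → ℝ := fun ω => A ω * Y1 ω + (1 - A ω) * Y0 ω
    let H : Ω → ℝ := fun ω => hfun (Y ω, A ω, Z ω)
    let β₀ : ℝ := ∫ ω, (m1f (Z ω) - m0f (Z ω)) ∂P
    let φ₁ : Ω → ℝ := fun ω =>
      Y ω * A ω / π (S (Z ω)) - Y ω * (1 - A ω) / (1 - π (S (Z ω)))
    let φ₀ : Ω → ℝ := fun ω =>
      A ω / π (S (Z ω)) * (Y ω - m1f (Z ω))
        - (1 - A ω) / (1 - π (S (Z ω))) * (Y ω - m0f (Z ω))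
        + (m1f (Z ω) - m0f (Z ω) - β₀)
    MemLp H 2 P →
    ((fun ω => htilde (Z ω)) =ᵐ[P]
      P[H | MeasurableSpace.comap (fun ω => (A ω, Z ω)) inferInstance]) →
    (∫ ω, htilde (Z ω) ∂P = 0) →
    ∫ ω, H ω * (φ₁ ω - φ₀ ω) ∂P = 0 := by
  intro Y H β₀ φ₁ φ₀ hH hcond hzero
  set mZ := MeasurableSpace.comap Z inferInstance
  set mAZ := MeasurableSpace.comap (fun ω => (A ω, Z ω)) inferInstance
  have hZ_mZ : Measurable[mZ] Z := comap_measurable Z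
  have hAZ_mAZ : Measurable[mAZ] fun ω => (A ω, Z ω) := comap_measurable _
  have hZ_mAZ : Measurable[mAZ] Z := measurable_snd.comp hAZ_mAZ
  have hA₀₁ : ∀ ω, A ω ∈ Set.Icc 0 1 := fun ω => by rcases hA01 ω with h | h <;> simp [h]
  have : Nonempty (Fin 𝒮) := ⟨S 0⟩
  obtain ⟨ε, hε, hπε⟩ := exists_pos_forall_mem_Icc_of_finite hπ0 hπ1
  have hπS : Measurable fun z => π (S z) := measurable_from_top.comp hS
  have hμ₀ : MemLp (fun ω => m0f (Z ω)) 2 P := (hY0.condExp one_le_two).ae_eq hm0.symm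
  have hμ₁ : MemLp (fun ω => m1f (Z ω)) 2 P := (hY1.condExp one_le_two).ae_eq hm1.symm
  have hφ : ∀ ω, φ₁ ω - φ₀ ω = ipwEifDifference A (fun ω => π (S (Z ω)))
      (fun ω => m0f (Z ω)) (fun ω => m1f (Z ω)) β₀ ω := fun ω => by
    simp only [φ₁, φ₀, ipwEifDifference]; ring
  simp_rw [hφ]
  exact integral_mul_eq_zero_of_condExp_ae_eq_const hZ_mAZ.comap_le (hA.prodMk hZ).comap_le hH
    (hhtilde.comp hZ_mZ).stronglyMeasurable hzero hcond
    (memLp_ipwEifDifference β₀ hA (hπS.comp hZ) hA₀₁ hε (fun ω => hπε _) hμ₀ hμ₁)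
    (measurable_ipwEifDifference β₀ (measurable_fst.comp hAZ_mAZ) (hπS.comp hZ_mAZ)
      (hm0f.comp hZ_mAZ) (hm1f.comp hZ_mAZ)).stronglyMeasurable
    (condExp_ipwEifDifference hZ.comap_le β₀ hA (hπS.comp hZ_mZ) (hm0f.comp hZ_mZ)
      (hm1f.comp hZ_mZ) hA₀₁ hprop hε (fun ω => hπε _) (hμ₀.integrable one_le_two)
      (hμ₁.integrable one_le_two))

/-- Orthogonality of `φ₁ - φ₀` to the tangent space: if `h ∈ L²(P₀)` has conditional
expectation given `(A, Z)` not depending on `A` (equal to `h̃(Z)`) and `E[h̃(Z)] = 0`, then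
`E[h(Y,A,Z)(φ₁(Y,A,Z) - φ₀(Y,A,Z))] = 0`. -/
theorem eif_projection_orthogonality
    {Ω : Type*} [mΩ : MeasurableSpace Ω] (P : Measure Ω) [IsProbabilityMeasure P]
    (k 𝒮 : ℕ) (Y0 Y1 : Ω → ℝ) (Z : Ω → Fin k → ℝ) (A : Ω → ℝ)
    (S : (Fin k → ℝ) → Fin 𝒮) (π : Fin 𝒮 → ℝ)
    (hπ0 : ∀ s, 0 < π s) (hπ1 : ∀ s, π s < 1)
    (hZ : Measurable Z) (hS : Measurable S) (hA : Measurable A)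
    (hY0m : Measurable Y0) (hY1m : Measurable Y1)
    (hA01 : ∀ ω, A ω = 0 ∨ A ω = 1)
    (hY0 : MemLp Y0 2 P) (hY1 : MemLp Y1 2 P)
    (hprop : (P[A | MeasurableSpace.comap Z inferInstance])
      =ᵐ[P] fun ω => π (S (Z ω)))
    (m0f m1f : (Fin k → ℝ) → ℝ) (hm0f : Measurable m0f) (hm1f : Measurable m1f)
    (hm0 : (fun ω => m0f (Z ω)) =ᵐ[P] P[Y0 | MeasurableSpace.comap Z inferInstance])
    (hm1 : (fun ω => m1f (Z ω)) =ᵐ[P] P[Y1 | MeasurableSpace.comap Z inferInstance])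
    (hfun : ℝ × ℝ × (Fin k → ℝ) → ℝ) (hhfun : Measurable hfun)
    (htilde : (Fin k → ℝ) → ℝ) (hhtilde : Measurable htilde) :
    let Y : Ω → ℝ := fun ω => A ω * Y1 ω + (1 - A ω) * Y0 ω
    let H : Ω → ℝ := fun ω => hfun (Y ω, A ω, Z ω)
    let β₀ : ℝ := ∫ ω, (m1f (Z ω) - m0f (Z ω)) ∂P
    let φ₁ : Ω → ℝ := fun ω =>
      Y ω * A ω / π (S (Z ω)) - Y ω * (1 - A ω) / (1 - π (S (Z ω)))
    let φ₀ : Ω → ℝ := fun ω =>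
      A ω / π (S (Z ω)) * (Y ω - m1f (Z ω))
        - (1 - A ω) / (1 - π (S (Z ω))) * (Y ω - m0f (Z ω))
        + (m1f (Z ω) - m0f (Z ω) - β₀)
    MemLp H 2 P →
    ((fun ω => htilde (Z ω)) =ᵐ[P]
      P[H | MeasurableSpace.comap (fun ω => (A ω, Z ω)) inferInstance]) →
    (∫ ω, htilde (Z ω) ∂P = 0) →
    ∫ ω, H ω * (φ₁ ω - φ₀ ω) ∂P = 0 :=
  eif_projection_orthogonality_general (mΩ := mΩ) P k 𝒮 Y0 Y1 Z A S π hπ0 hπ1 hZ hS hA hA01 hY0 hY1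
    hprop m0f m1f hm0f hm1f hm0 hm1 hfun htilde hhtilde
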